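/- arXiv:2506.20118 — 3 statements merged into one kernel-verified Lean document; each statement's English description precedes it below -/
import Mathlib

section
/- Let p be a prime, k ≥ 1, and suppose f(t) ∣ t^N − 1 + p^m·v(t) in (ℤ/p^{k+1})[t] where m ≥ 1 and v is some polynomial. Then f(t) divides t^{pN} − 1 + p^{m+1}·v(t)·u(t) in (ℤ/p^{k+1})[t] for some polynomial u; in particular if f ∣ t^N − 1 in (ℤ/p^k)[t] then f ∣ t^{pN} − 1 in (ℤ/p^{k+1})[t]. -/
open Polynomial

private lemma key_identity {R : Type*} [CommRing R] (p : ℕ) (x c v : R) :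
    (x - 1 + c * v) *
      ((∑ i ∈ Finset.range p, x ^ i) -
        c * v * (∑ i ∈ Finset.range p, ∑ j ∈ Finset.range i, x ^ j)) =
    x ^ p - 1 + (p : R) * c * v -
      c ^ 2 * v ^ 2 * (∑ i ∈ Finset.range p, ∑ j ∈ Finset.range i, x ^ j) := by
  have h1 := geom_sum_mul x p
  have h2 : (∑ i ∈ Finset.range p, ∑ j ∈ Finset.range i, x ^ j) * (x - 1) =
      (∑ i ∈ Finset.range p, x ^ i) - (p : R) := by
    rw [Finset.sum_mul]
    simp_rw [geom_sum_mul]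
    rw [Finset.sum_sub_distrib]
    simp
  linear_combination h1 - c * v * h2

private lemma step {R : Type*} [CommRing R] (p N m : ℕ) (hm : 1 ≤ m)
    (f v : Polynomial R) (hdvd : f ∣ X ^ N - 1 + C ((p : R) ^ m) * v) :
    ∃ u : Polynomial R, f ∣ X ^ (p * N) - 1 + C ((p : R) ^ (m + 1)) * v * u := by
  set x : Polynomial R := X ^ N with hx
  set r : Polynomial R := ∑ i ∈ Finset.range p, ∑ j ∈ Finset.range i, x ^ j with hr
  refine ⟨1 - C ((p : R) ^ (m - 1)) * v * r,
    dvd_trans hdvd ⟨(∑ i ∈ Finset.range p, x ^ i) - C ((p : R) ^ m) * v * r, ?_⟩⟩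
  have hkey := key_identity p x (C ((p : R) ^ m)) v
  have hxp : x ^ p = X ^ (p * N) := by rw [hx, ← pow_mul, mul_comm]
  have hC1 : ((p : Polynomial R)) * C ((p : R) ^ m) = C ((p : R) ^ (m + 1)) := by
    rw [← map_natCast (C : R →+* Polynomial R) p, ← C_mul, ← pow_succ']
  have hC2 : C ((p : R) ^ m) ^ 2 = C ((p : R) ^ (m + 1)) * C ((p : R) ^ (m - 1)) := by
    have hexp : m * 2 = m + 1 + (m - 1) := by omega
    rw [← C_pow, ← C_mul, ← pow_mul, ← pow_add, hexp]
  rw [hxp, hC1, hC2] at hkey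
  rw [hkey]
  ring

/-- Lifting divisibility: if `f ∣ t^N - 1 + p^m·v` in `(ℤ/p^(k+1))[t]` with `m ≥ 1`, then
`f ∣ t^(pN) - 1 + p^(m+1)·v·u` for some `u`; in particular, if `f` reduced mod `p^k`
divides `t^N - 1`, then `f ∣ t^(pN) - 1` in `(ℤ/p^(k+1))[t]`. -/
theorem dvd_lift_pow (p k N m : ℕ) (hp : p.Prime) (hN : 0 < N) (hm : 1 ≤ m)
    (f v : Polynomial (ZMod (p ^ (k + 1))))
    (hdvd : f ∣ X ^ N - 1 + C ((p : ZMod (p ^ (k + 1))) ^ m) * v) :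
    (∃ u : Polynomial (ZMod (p ^ (k + 1))),
        f ∣ X ^ (p * N) - 1 + C ((p : ZMod (p ^ (k + 1))) ^ (m + 1)) * v * u) ∧
      (f.map (ZMod.castHom (pow_dvd_pow p (Nat.le_succ k)) (ZMod (p ^ k))) ∣ X ^ N - 1 →
        f ∣ X ^ (p * N) - 1) := by
  have hp0 : p ^ (k + 1) ≠ 0 := pow_ne_zero _ hp.pos.ne'
  haveI : NeZero (p ^ (k + 1)) := ⟨hp0⟩
  have hXdvd : (X ^ N - 1 : Polynomial (ZMod (p ^ (k + 1)))) ∣ X ^ (p * N) - 1 := by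
    refine ⟨∑ i ∈ Finset.range p, (X ^ N) ^ i, ?_⟩
    rw [mul_comm (X ^ N - 1 : Polynomial (ZMod (p ^ (k + 1)))), geom_sum_mul, ← pow_mul, mul_comm N p]
  refine ⟨step p N m hm f v hdvd, fun hmap => ?_⟩
  rcases Nat.eq_zero_or_pos k with hk | hk
  · -- k = 0 : then p^m = 0 in ZMod p^(0+1) = ZMod p, so f ∣ X^N - 1 already
    subst hk
    have hz : (p : ZMod (p ^ (0 + 1))) = 0 :=
      (ZMod.natCast_eq_zero_iff p (p ^ (0 + 1))).mpr (by simp)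
    rw [hz, zero_pow (by omega), map_zero, zero_mul, add_zero] at hdvd
    exact dvd_trans hdvd hXdvd
  · set φ := ZMod.castHom (pow_dvd_pow p (Nat.le_succ k)) (ZMod (p ^ k)) with hφ
    obtain ⟨g, hg⟩ := hmap
    obtain ⟨g', hg'⟩ := Polynomial.map_surjective φ (ZMod.ringHom_surjective φ) g
    set d : Polynomial (ZMod (p ^ (k + 1))) := f * g' - (X ^ N - 1) with hd
    have hdmap : d.map φ = 0 := by
      rw [hd, Polynomial.map_sub, Polynomial.map_mul, hg', ← hg, Polynomial.map_sub,
        Polynomial.map_pow, Polynomial.map_one, map_X, sub_self]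
    have hcoeff : ∀ n, ∃ b : ZMod (p ^ (k + 1)),
        d.coeff n = (p : ZMod (p ^ (k + 1))) ^ k * b := by
      intro n
      have h0 : φ (d.coeff n) = 0 := by
        have := congrArg (fun q => Polynomial.coeff q n) hdmap
        simpa [Polynomial.coeff_map] using this
      set a := d.coeff n with ha
      have hval : (a.val : ZMod (p ^ k)) = 0 := by
        rw [ZMod.natCast_val]
        simpa [hφ, ZMod.castHom_apply] using h0
      obtain ⟨c, hc⟩ := (ZMod.natCast_eq_zero_iff _ _).mp hval
      refine ⟨(c : ZMod (p ^ (k + 1))), ?_⟩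
      have : a = ((a.val : ℕ) : ZMod (p ^ (k + 1))) := (ZMod.natCast_zmod_val a).symm
      rw [this, hc]
      push_cast
      ring
    choose b hb using hcoeff
    set w : Polynomial (ZMod (p ^ (k + 1))) := ∑ n ∈ d.support, C (b n) * X ^ n with hw
    have hdw : C ((p : ZMod (p ^ (k + 1))) ^ k) * w = d := by
      rw [hw, Finset.mul_sum]
      conv_rhs => rw [d.as_sum_support_C_mul_X_pow]
      refine Finset.sum_congr rfl fun n _ => ?_
      rw [← mul_assoc, ← C_mul, ← hb n]
    have hfd : f ∣ X ^ N - 1 + C ((p : ZMod (p ^ (k + 1))) ^ k) * w := by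
      rw [hdw]
      exact ⟨g', by rw [hd]; ring⟩
    obtain ⟨u, hu⟩ := step p N k hk f w hfd
    have hz : (p : ZMod (p ^ (k + 1))) ^ (k + 1) = 0 := by
      rw [← Nat.cast_pow, ZMod.natCast_self]
    rw [hz, map_zero, zero_mul, zero_mul, add_zero] at hu
    exact hu
end

section
/- Let p > 3 be prime, k ≥ 1, and let C = [[1,a],[b,1+ab]] over ℤ/p^k with ab ≡ p − 4 (mod p). Then the least T with C^T = I over ℤ/p^k equals 2·p^k. -/
open Matrix Finset
namespace CatAux
variable {R : Type*} [CommRing R]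

def st (c : R) : ℕ → R × R
  | 0 => (0, 1)
  | (n+1) => (c * (st c n).1 + (st c n).2, c * (st c n).1)

theorem st_pow (c : R) (E : Matrix (Fin 2) (Fin 2) R)
    (hE : E * E = c • E + c • 1) (n : ℕ) :
    E ^ n = (st c n).1 • E + (st c n).2 • (1 : Matrix (Fin 2) (Fin 2) R) := by
  induction n with
  | zero => simp [st]
  | succ m ih =>
    rw [pow_succ, ih, st, add_mul, smul_mul_assoc, smul_mul_assoc, hE, one_mul]
    match_scalars <;> ring

theorem st_dvd (p : ℕ) (c : R) (hc : (p:R) ∣ c) (n : ℕ) :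
    (p:R)^(n/2) ∣ (st c n).1 ∧ (p:R)^((n+1)/2) ∣ (st c n).2 := by
  induction n with
  | zero => simp [st]
  | succ m ih =>
    obtain ⟨h1, h2⟩ := ih
    have hcs : (p:R)^(m/2 + 1) ∣ c * (st c m).1 := by
      rw [pow_succ, mul_comm]
      exact mul_dvd_mul hc h1
    constructor
    · exact dvd_add ((pow_dvd_pow (p:R) (by omega : (m+1)/2 ≤ m/2 + 1)).trans hcs)
        ((pow_dvd_pow (p:R) le_rfl).trans h2)
    · exact (pow_dvd_pow (p:R) (by omega : (m+1+1)/2 ≤ m/2 + 1)).trans hcs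

theorem key_step (p : ℕ) (hp : p.Prime) (hp5 : 5 ≤ p)
    (c : R) (hc : (p:R) ∣ c) (E : Matrix (Fin 2) (Fin 2) R)
    (hE : E * E = c • E + c • 1) (x u : R) (j : ℕ) :
    ∃ w v : R, (x • 1 + ((p:R)^j * u) • E) ^ p
      = (x ^ p + (p:R) * w) • (1 : Matrix (Fin 2) (Fin 2) R)
        + ((p:R)^(j+1) * (x^(p-1) * u + (p:R) * v)) • E := by
  have hcomm : Commute (x • (1 : Matrix (Fin 2) (Fin 2) R)) (((p:R)^j * u) • E) :=
    ((Commute.one_left E).smul_left x).smul_right _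
  have hbin := hcomm.add_pow p
  have hterm : ∀ m, (x • (1 : Matrix (Fin 2) (Fin 2) R)) ^ m
        * (((p:R)^j * u) • E) ^ (p - m) * (p.choose m : Matrix (Fin 2) (Fin 2) R)
      = ((p.choose m : R) * x ^ m * ((p:R)^j * u) ^ (p - m)) • E ^ (p - m) := by
    intro m
    rw [smul_pow, smul_pow, one_pow, smul_mul_smul_comm, one_mul]
    rw [((Nat.cast_commute (p.choose m) _).symm).eq, ← nsmul_eq_mul,
      ← Nat.cast_smul_eq_nsmul R, smul_smul]
    ring_nf
  rw [Finset.sum_congr rfl (fun m _ => hterm m)] at hbin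
  rw [show p + 1 = (p-1) + 1 + 1 by omega, Finset.sum_range_succ, Finset.sum_range_succ,
    show p - 1 + 1 = p by omega] at hbin
  -- last two terms
  rw [Nat.sub_self, Nat.choose_self, pow_zero, Nat.cast_one, one_mul, mul_one,
    show p - (p-1) = 1 by omega,
    show p.choose (p-1) = p by
      rw [← Nat.choose_symm (by omega : p - 1 ≤ p), show p - (p-1) = 1 by omega,
        Nat.choose_one_right],
    pow_one, pow_one, pow_zero] at hbin
  -- rewrite remaining sum terms using st_pow and collect
  have hsum : ∀ m ∈ Finset.range (p-1),
      ((p.choose m : R) * x ^ m * ((p:R)^j * u) ^ (p - m)) • E ^ (p - m)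
      = (((p.choose m : R) * x ^ m * ((p:R)^j * u) ^ (p - m)) * (st c (p-m)).1) • E
        + (((p.choose m : R) * x ^ m * ((p:R)^j * u) ^ (p - m)) * (st c (p-m)).2) • 1 := by
    intro m _
    rw [st_pow c E hE (p - m), smul_add, smul_smul, smul_smul]
  rw [Finset.sum_congr rfl hsum, Finset.sum_add_distrib, ← Finset.sum_smul, ← Finset.sum_smul]
    at hbin
  set A : R := ∑ m ∈ Finset.range (p-1),
    ((p.choose m : R) * x ^ m * ((p:R)^j * u) ^ (p - m)) * (st c (p-m)).1 with hA
  set B : R := ∑ m ∈ Finset.range (p-1),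
    ((p.choose m : R) * x ^ m * ((p:R)^j * u) ^ (p - m)) * (st c (p-m)).2 with hB
  have hdvdA : (p:R)^(j+2) ∣ A := by
    apply Finset.dvd_sum
    intro m hm
    have hm' : m < p - 1 := Finset.mem_range.mp hm
    obtain ⟨σ, hσ⟩ := (st_dvd p c hc (p-m)).1
    have hy2 : ((p:R)^j*u)^(p-m) = (p:R)^(j*(p-m)) * u^(p-m) := by
      rw [mul_pow, ← pow_mul]
    rcases Nat.eq_zero_or_pos m with hm0 | hm0
    · subst hm0
      have hle : j + 2 ≤ j * (p - 0) + (p - 0)/2 := by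
        have h1 : j * 1 ≤ j * (p - 0) := Nat.mul_le_mul_left j (by omega)
        omega
      have hd : (p:R)^(j * (p - 0) + (p - 0)/2)
          ∣ (p.choose 0 : R) * x ^ 0 * ((p:R)^j*u)^(p-0) * (st c (p-0)).1 :=
        ⟨(p.choose 0 : R) * x ^ 0 * u^(p-0) * σ, by rw [hσ, hy2]; ring⟩
      exact (pow_dvd_pow (p:R) hle).trans hd
    · obtain ⟨C', hC'⟩ : (p:R) ∣ (p.choose m : R) :=
        Nat.cast_dvd_cast (hp.dvd_choose_self (by omega) (by omega))
      have hle : j + 2 ≤ 1 + j * (p - m) + (p - m)/2 := by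
        have h1 : j * 1 ≤ j * (p - m) := Nat.mul_le_mul_left j (by omega)
        have h2 : 1 ≤ (p - m)/2 := by omega
        omega
      have hd : (p:R)^(1 + j * (p - m) + (p - m)/2)
          ∣ (p.choose m : R) * x ^ m * ((p:R)^j*u)^(p-m) * (st c (p-m)).1 :=
        ⟨C' * x ^ m * u^(p-m) * σ, by rw [hσ, hy2, hC']; ring⟩
      exact (pow_dvd_pow (p:R) hle).trans hd
  have hdvdB : (p:R) ∣ B := by
    apply Finset.dvd_sum
    intro m hm
    have hm' : m < p - 1 := Finset.mem_range.mp hm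
    obtain ⟨σ, hσ⟩ := (st_dvd p c hc (p-m)).2
    have : (p:R)^1 ∣ (p:R)^((p-m+1)/2) := pow_dvd_pow _ (by omega)
    rw [pow_one] at this
    exact Dvd.dvd.mul_left (hσ ▸ this.mul_right σ) _
  obtain ⟨v, hv⟩ := hdvdA
  obtain ⟨w, hw⟩ := hdvdB
  refine ⟨w, v, ?_⟩
  rw [hbin, hv, hw]
  match_scalars <;> ring

theorem sq_form (c : R) (E : Matrix (Fin 2) (Fin 2) R)
    (hE : E * E = c • E + c • 1) (x y : R) :
    (x • 1 + y • E)^2 = (x^2 + c*y^2) • (1 : Matrix (Fin 2) (Fin 2) R)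
      + (2*x*y + c*y^2) • E := by
  rw [sq, add_mul, mul_add, mul_add]
  simp only [smul_mul_smul_comm, one_mul, mul_one, hE]
  match_scalars <;> ring

theorem dvd_of_cast_eq_zero (p k : ℕ) (hp : p.Prime) (hk : k ≠ 0) (z : ZMod (p^k))
    (h : ZMod.castHom (dvd_pow_self p hk) (ZMod p) z = 0) : (p : ZMod (p^k)) ∣ z := by
  haveI : NeZero (p^k) := ⟨pow_ne_zero k hp.pos.ne'⟩
  have hz : ((z.val : ℕ) : ZMod (p^k)) = z := ZMod.natCast_zmod_val z
  rw [← hz, map_natCast, ZMod.natCast_eq_zero_iff] at h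
  obtain ⟨m, hm⟩ := h
  exact ⟨(m : ZMod (p^k)), by rw [← hz, hm]; push_cast; ring⟩

theorem isUnit_of_cast_ne_zero (p k : ℕ) (hp : p.Prime) (hk : k ≠ 0) (z : ZMod (p^k))
    (h : ZMod.castHom (dvd_pow_self p hk) (ZMod p) z ≠ 0) : IsUnit z := by
  haveI : NeZero (p^k) := ⟨pow_ne_zero k hp.pos.ne'⟩
  have hz : ((z.val : ℕ) : ZMod (p^k)) = z := ZMod.natCast_zmod_val z
  rw [← hz]
  rw [ZMod.isUnit_iff_coprime]
  apply Nat.Coprime.pow_right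
  rw [Nat.coprime_comm]
  apply (hp.coprime_iff_not_dvd).mpr
  intro hdvd
  apply h
  rw [← hz, map_natCast, ZMod.natCast_eq_zero_iff]
  exact hdvd

end CatAux

open CatAux in
/-- If `p > 3` is prime and `ab ≡ −4 (mod p)`, then the Cat map matrix
`C = [[1,a],[b,1+ab]]` over `ℤ/p^k` has order exactly `2·p^k`. -/
theorem cat_period_two_pk (p k : ℕ) (hp : p.Prime) (hp3 : 3 < p) (hk : 1 ≤ k)
    (a b : ZMod (p ^ k))
    (hab : ZMod.castHom (dvd_pow_self p (Nat.one_le_iff_ne_zero.mp hk)) (ZMod p) (a * b)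
      = -4) :
    orderOf (!![1, a; b, 1 + a * b] : Matrix (Fin 2) (Fin 2) (ZMod (p ^ k)))
      = 2 * p ^ k := by
  have hk0 : k ≠ 0 := Nat.one_le_iff_ne_zero.mp hk
  haveI : NeZero (p^k) := ⟨pow_ne_zero k hp.pos.ne'⟩
  haveI : Fact p.Prime := ⟨hp⟩
  have hp5 : 5 ≤ p := by
    have h4 : p ≠ 4 := by intro h; rw [h] at hp; norm_num at hp
    omega
  set φ := ZMod.castHom (dvd_pow_self p hk0) (ZMod p) with hφ
  set C : Matrix (Fin 2) (Fin 2) (ZMod (p^k)) := !![1,a;b,1+a*b] with hCdef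
  set E : Matrix (Fin 2) (Fin 2) (ZMod (p^k)) := !![-2,-a;-b,-2-a*b] with hEdef
  set c : ZMod (p^k) := -(4 + a*b) with hcdef
  have hE : E * E = c • E + c • 1 := by
    ext i j
    fin_cases i <;> fin_cases j <;>
      simp [hEdef, hcdef, Matrix.mul_apply, Fin.sum_univ_two, Matrix.one_apply] <;> ring
  have hCM : C = -(1 + E) := by
    ext i j
    fin_cases i <;> fin_cases j <;>
      simp [hCdef, hEdef, Matrix.one_apply] <;> ring
  have hφc : φ c = 0 := by
    rw [hcdef, map_neg, _root_.map_add, hab, map_ofNat]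
    ring
  have hc : (p : ZMod (p^k)) ∣ c := dvd_of_cast_eq_zero p k hp hk0 c hφc
  have hφp : φ (p : ZMod (p^k)) = 0 := by
    rw [map_natCast, ZMod.natCast_self]
  -- main induction
  have main : ∀ j : ℕ, ∃ x u : ZMod (p^k), φ x = 1 ∧ φ u = 1 ∧
      (1 + E)^(p^j) = x • 1 + ((p : ZMod (p^k))^j * u) • E := by
    intro j
    induction j with
    | zero => exact ⟨1, 1, _root_.map_one φ, _root_.map_one φ, by simp⟩
    | succ i ih =>
      obtain ⟨x, u, hx, hu, hXE⟩ := ih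
      obtain ⟨w, v, hwv⟩ := key_step p hp hp5 c hc E hE x u i
      refine ⟨x^p + (p : ZMod (p^k))*w, x^(p-1)*u + (p : ZMod (p^k))*v, ?_, ?_, ?_⟩
      · rw [_root_.map_add, map_pow, hx, one_pow, _root_.map_mul, hφp, zero_mul, add_zero]
      · rw [_root_.map_add, _root_.map_mul, map_pow, hx, one_pow, one_mul, hu, _root_.map_mul, hφp,
          zero_mul, add_zero]
      · rw [pow_succ, pow_mul, hXE, hwv]
  -- upper bound facts
  obtain ⟨x, u, hx, hu, hXk⟩ := main k
  have hz : ∀ n, k ≤ n → ((p : ZMod (p^k)))^n = 0 := by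
    intro n hn
    have hpk0 : ((p : ZMod (p^k)))^k = 0 := by
      rw [← Nat.cast_pow, ZMod.natCast_self]
    rw [← Nat.sub_add_cancel hn, pow_add, hpk0, mul_zero]
  have hMk : (1 + E)^(p^k) = x • 1 := by
    rw [hXk, hz k le_rfl, zero_mul, zero_smul, add_zero]
  have hdet1E : ((1 : Matrix (Fin 2) (Fin 2) (ZMod (p^k))) + E).det = 1 := by
    have h1E : (1 : Matrix (Fin 2) (Fin 2) (ZMod (p^k))) + E = !![-1,-a;-b,-1-a*b] := by
      ext i j
      fin_cases i <;> fin_cases j <;> simp [hEdef, Matrix.one_apply] <;> ring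
    rw [h1E, Matrix.det_fin_two_of]
    ring
  have hxsq : x^2 = 1 := by
    have := congrArg Matrix.det hMk
    rw [Matrix.det_pow, hdet1E, one_pow, Matrix.det_smul, Matrix.det_one,
      Fintype.card_fin, mul_one] at this
    exact this.symm
  have hx1 : x = 1 := by
    have hxu : IsUnit (x + 1) := by
      apply isUnit_of_cast_ne_zero p k hp hk0
      rw [_root_.map_add, hx, _root_.map_one]
      intro h
      have h2 : ((2:ℕ) : ZMod p) = 0 := by push_cast; linear_combination h
      rw [ZMod.natCast_eq_zero_iff] at h2
      have := Nat.le_of_dvd (by norm_num) h2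
      omega
    have hprod : (x - 1) * (x + 1) = 0 := by linear_combination hxsq
    have := (IsUnit.mul_left_eq_zero hxu).mp hprod
    exact sub_eq_zero.mp this
  have hMk1 : (1 + E)^(p^k) = 1 := by rw [hMk, hx1, one_smul]
  -- units
  have hφ4 : ((4:ℕ) : ZMod p) ≠ 0 := by
    intro h
    rw [ZMod.natCast_eq_zero_iff] at h
    have := Nat.le_of_dvd (by norm_num) h
    omega
  have ha : IsUnit a := by
    apply isUnit_of_cast_ne_zero p k hp hk0
    intro h
    rw [_root_.map_mul, h, zero_mul] at hab
    apply hφ4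
    push_cast
    linear_combination hab
  -- lower bound
  obtain ⟨x', u', hx', hu', hXk1⟩ := main (k-1)
  have hcy : c * (((p : ZMod (p^k)))^(k-1)*u')^2 = 0 := by
    obtain ⟨γ, hγ⟩ := hc
    have h0 : ((p : ZMod (p^k)))^((k-1)*2+1) = 0 := hz _ (by omega)
    calc c * (((p : ZMod (p^k)))^(k-1)*u')^2
        = ((p : ZMod (p^k)))^((k-1)*2+1) * (γ * u'^2) := by rw [hγ]; ring
      _ = 0 := by rw [h0, zero_mul]
  have hsq2 : (1 + E)^(p^(k-1)*2)
      = (x'^2) • 1 + (2*x'*(((p : ZMod (p^k)))^(k-1)*u')) • E := by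
    rw [pow_mul, hXk1, sq_form c E hE, hcy, add_zero, add_zero]
  -- the three key facts about C
  have hfact1 : C ^ (2 * p^k) = 1 := by
    rw [hCM, neg_pow, Even.neg_one_pow ⟨p^k, by ring⟩, one_mul,
      show 2 * p^k = p^k * 2 by ring, pow_mul, hMk1, one_pow]
  have hfact2 : C ^ (p^k) = -1 := by
    rw [hCM, neg_pow, hMk1, mul_one, Odd.neg_one_pow ((hp.odd_of_ne_two (by omega)).pow)]
  have hne1 : (-1 : Matrix (Fin 2) (Fin 2) (ZMod (p^k))) ≠ 1 := by
    intro h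
    have h00 := congrFun (congrFun h 0) 0
    simp [Matrix.one_apply, Matrix.neg_apply] at h00
    have h2 : ((2:ℕ) : ZMod (p^k)) = 0 := by push_cast; linear_combination -h00
    rw [ZMod.natCast_eq_zero_iff] at h2
    have h2' := Nat.le_of_dvd (by norm_num) h2
    have h5 : 5 ≤ p^k := le_trans hp5 (Nat.le_self_pow hk0 p)
    omega
  have hppow_ne : ((p : ZMod (p^k)))^(k-1) ≠ 0 := by
    intro h
    rw [← Nat.cast_pow, ZMod.natCast_eq_zero_iff] at h
    have := (Nat.pow_dvd_pow_iff_le_right hp.one_lt).mp h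
    omega
  have hfact3 : C ^ (2 * p^(k-1)) ≠ 1 := by
    rw [hCM, neg_pow, Even.neg_one_pow ⟨p^(k-1), by ring⟩, one_mul,
      show 2 * p^(k-1) = p^(k-1) * 2 by ring, hsq2]
    intro h
    have h01 := congrFun (congrFun h 0) 1
    simp [hEdef, Matrix.one_apply, Matrix.add_apply, Matrix.smul_apply] at h01
    -- h01 should say something like 2*x'*(p^(k-1)*u') * a = 0 (up to sign/shape)
    have hunit : IsUnit ((2:ZMod (p^k)) * x' * u' * a) := by
      have h2u : IsUnit (2 : ZMod (p^k)) := by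
        apply isUnit_of_cast_ne_zero p k hp hk0
        intro hh
        rw [map_ofNat] at hh
        have h2 : ((2:ℕ) : ZMod p) = 0 := by push_cast; exact hh
        rw [ZMod.natCast_eq_zero_iff] at h2
        have := Nat.le_of_dvd (by norm_num) h2
        omega
      have hx'u : IsUnit x' := by
        apply isUnit_of_cast_ne_zero p k hp hk0; rw [hx']; exact one_ne_zero
      have hu'u : IsUnit u' := by
        apply isUnit_of_cast_ne_zero p k hp hk0; rw [hu']; exact one_ne_zero
      exact ((h2u.mul hx'u).mul hu'u).mul ha
    apply hppow_ne
    apply (IsUnit.mul_right_eq_zero hunit).mp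
    linear_combination h01
  -- conclude
  have hdvd : orderOf C ∣ 2 * p^k := orderOf_dvd_of_pow_eq_one hfact1
  have hnd1 : ¬ orderOf C ∣ p^k := by
    intro h
    exact hne1 (hfact2 ▸ orderOf_dvd_iff_pow_eq_one.mp h)
  have hnd2 : ¬ orderOf C ∣ 2 * p^(k-1) := fun h => hfact3 (orderOf_dvd_iff_pow_eq_one.mp h)
  have h2n : 2 ∣ orderOf C := by
    by_contra h2n
    have hcop : (orderOf C).Coprime 2 :=
      Nat.Coprime.symm ((Nat.prime_two.coprime_iff_not_dvd).mpr h2n)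
    exact hnd1 (hcop.dvd_of_dvd_mul_left hdvd)
  obtain ⟨m, hm⟩ := h2n
  have hmdvd : m ∣ p^k := by
    apply Nat.dvd_of_mul_dvd_mul_left (show 0 < 2 by norm_num)
    rw [← hm]
    exact hdvd
  obtain ⟨i, hik, hi⟩ := (Nat.dvd_prime_pow hp).mp hmdvd
  rcases eq_or_lt_of_le hik with hik' | hik'
  · rw [hm, hi, hik']
  · exfalso
    apply hnd2
    rw [hm, hi]
    exact mul_dvd_mul_left 2 (pow_dvd_pow p (by omega))
end

section
/- Let p > 3 be prime, k ≥ 1, and C = [[1,a],[b,1+ab]] over ℤ/p^k. If ab ≡ 0 (mod p^k) and a is a unit mod p, then the least T with C^T ≡ I (mod p^k) is p^k. -/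
open Matrix

/-- If `p > 3` is prime, `ab = 0` in `ℤ/p^k`, and `a` is a unit mod `p`, then the Cat map
matrix `C = [[1,a],[b,1+ab]]` over `ℤ/p^k` has order exactly `p^k`. -/
theorem cat_period_pk (p k : ℕ) (hp : p.Prime) (hp3 : 3 < p) (hk : 1 ≤ k)
    (a b : ZMod (p ^ k)) (hab : a * b = 0)
    (ha : IsUnit (ZMod.castHom (dvd_pow_self p (Nat.one_le_iff_ne_zero.mp hk))
      (ZMod p) a)) :
    orderOf (!![1, a; b, 1 + a * b] : Matrix (Fin 2) (Fin 2) (ZMod (p ^ k)))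
      = p ^ k := by
  have hkne : p ^ k ≠ 0 := pow_ne_zero _ hp.pos.ne'
  haveI : NeZero (p ^ k) := ⟨hkne⟩
  -- a is a unit in ZMod (p^k)
  haveI : Fact p.Prime := ⟨hp⟩
  have haU : IsUnit a := by
    rw [← ZMod.natCast_zmod_val a, ZMod.isUnit_iff_coprime]
    have h1 : ¬ p ∣ a.val := by
      intro hdvd
      have h0 : (ZMod.castHom (dvd_pow_self p (Nat.one_le_iff_ne_zero.mp hk)) (ZMod p) a) = 0 := by
        rw [ZMod.castHom_apply, ← ZMod.natCast_val a]
        exact (ZMod.natCast_eq_zero_iff _ _).2 hdvd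
      rw [h0] at ha
      exact ha.ne_zero rfl
    exact Nat.Coprime.pow_right _ ((hp.coprime_iff_not_dvd.2 h1).symm)
  set N : Matrix (Fin 2) (Fin 2) (ZMod (p ^ k)) := !![0, a; b, 0] with hN
  have hba : b * a = 0 := by rw [mul_comm]; exact hab
  have hN2 : N * N = 0 := by
    simp [hN, Matrix.mul_fin_two, hab, hba]
    ext i j
    fin_cases i <;> fin_cases j <;> simp [hab, hba]
  set C : Matrix (Fin 2) (Fin 2) (ZMod (p ^ k)) := !![1, a; b, 1 + a * b] with hC
  have hCN : C = 1 + N := by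
    ext i j
    fin_cases i <;> fin_cases j <;> simp [hC, hN, hab, Matrix.one_apply]
  have hpow : ∀ m : ℕ, C ^ m = 1 + m • N := by
    intro m
    induction m with
    | zero => simp
    | succ m ih =>
      rw [pow_succ, ih, hCN]
      rw [add_mul, mul_add, mul_add, one_mul, mul_one, smul_mul_assoc, hN2, smul_zero,
        succ_nsmul, one_mul, add_zero, add_assoc, add_comm N (m • N)]
  have hiff : ∀ m : ℕ, C ^ m = 1 ↔ (p ^ k) ∣ m := by
    intro m
    rw [hpow m]
    constructor
    · intro h
      have h01 : (1 + m • N) 0 1 = (1 : Matrix (Fin 2) (Fin 2) (ZMod (p ^ k))) 0 1 := by rw [h]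
      simp [hN, Matrix.one_apply] at h01
      have hm0 : (m : ZMod (p ^ k)) = 0 := (haU.mul_left_eq_zero).1 h01
      exact (ZMod.natCast_eq_zero_iff _ _).1 hm0
    · intro h
      have hm0 : (m : ZMod (p ^ k)) = 0 := (ZMod.natCast_eq_zero_iff _ _).2 h
      have : m • N = 0 := by
        rw [← Nat.cast_smul_eq_nsmul (ZMod (p ^ k)), hm0, zero_smul]
      rw [this, add_zero]
  have h1 : orderOf C ∣ p ^ k := orderOf_dvd_of_pow_eq_one ((hiff _).2 dvd_rfl)
  have h2 : p ^ k ∣ orderOf C := (hiff _).1 (pow_orderOf_eq_one C)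
  exact Nat.dvd_antisymm h1 h2
end
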